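/- Let B = k{x_1,...,x_n} be the differential polynomial algebra over a differential field k of characteristic 0, graded by total degree deg (where each variable x_i^θ with θ = δ_1^{i_1}...δ_m^{i_m} has degree 1 + i_1 + ... + i_m). For f ∈ B let f̄ denote its highest homogeneous component with respect to deg. If f_1,...,f_r ∈ B are such that f̄_1,...,f̄_r are differentially algebraically independent over k, then for every u in the differential subalgebra generated by f_1,...,f_r, the highest homogeneous part ū lies in the differential subalgebra generated by f̄_1,...,f̄_r. -/

import Mathlib

/-!
Put `g_{i,θ} = θ f_i` and `ḡ_{i,θ} = θ f̄_i`. Each `δ_j` raises the degree of a homogeneous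
element by exactly one, so `ḡ_{i,θ}` is the component of `g_{i,θ}` of degree
`w(i,θ) = deg f_i + |θ|`, and `g_{i,θ}` has no component of higher degree. An element `u` of the
differential subalgebra generated by the `f_i` is `P(g)` for a polynomial `P` in the variables
`z_{i,θ}`; weighting `z_{i,θ}` by `w(i,θ)`, the component of `P(g)` of degree `wt P` is `Q(ḡ)`,
where `Q` is the top-weight part of `P`, and all other components have lower degree. Differential
independence of the `f̄_i` makes `Q(ḡ) ≠ 0`, hence `ū = Q(ḡ)`, an element of the
differential subalgebra generated by the `f̄_i`.
-/

open MvPolynomial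

/-- The free commutative monoid of derivative operators on `m` derivations. -/
abbrev DOp (m : ℕ) := Fin m →₀ ℕ

/-- The differential polynomial algebra `k{x_1,…,x_n}` with `m` commuting derivations:
the polynomial algebra on the variables `x_i^θ`. -/
abbrev DiffPoly (k : Type) [CommRing k] (n m : ℕ) := MvPolynomial (Fin n × DOp m) k

/-- The `i`-th derivation `δ_i` of `k{x_1,…,x_n}`, with `δ_i (x_j^θ) = x_j^{θ δ_i}`. -/
noncomputable def der (k : Type) [CommRing k] (n m : ℕ) (i : Fin m) :
    Derivation k (DiffPoly k n m) (DiffPoly k n m) :=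
  MvPolynomial.mkDerivation k fun p => X (p.1, p.2 + Finsupp.single i 1)

/-- Application of a derivative operator `θ = δ_1^{i_1} ⋯ δ_m^{i_m}`. -/
noncomputable def applyOp {k : Type} [CommRing k] {n m : ℕ} (θ : DOp m)
    (f : DiffPoly k n m) : DiffPoly k n m :=
  Fin.foldr m (fun i g => (⇑(der k n m i))^[θ i] g) f

/-- The differential subalgebra generated by a set: the smallest subalgebra containing it
and closed under all the derivations. -/
noncomputable def diffAdjoin (k : Type) [CommRing k] {n m : ℕ} (S : Set (DiffPoly k n m)) :
    Subalgebra k (DiffPoly k n m) :=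
  sInf {T | S ⊆ T ∧ ∀ i : Fin m, ∀ x ∈ T, der k n m i x ∈ T}

/-- The weight of the variable `x_j^θ`: `1 + |θ|`. -/
def dwt (n m : ℕ) : Fin n × DOp m → ℕ := fun p => 1 + p.2.sum fun _ v => v

/-- The degree of a differential polynomial. -/
noncomputable def ddeg {k : Type} [CommRing k] {n m : ℕ} (f : DiffPoly k n m) : ℕ :=
  weightedTotalDegree (dwt n m) f

/-- The highest homogeneous part of a differential polynomial. -/
noncomputable def dtop {k : Type} [CommRing k] {n m : ℕ} (f : DiffPoly k n m) :
    DiffPoly k n m :=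
  weightedHomogeneousComponent (dwt n m) (ddeg f) f

/-- The variable `x` of `k{x,y}`. -/
noncomputable def xx (k : Type) [CommRing k] (m : ℕ) : DiffPoly k 2 m := X (0, 0)

/-- The variable `y` of `k{x,y}`. -/
noncomputable def yy (k : Type) [CommRing k] (m : ℕ) : DiffPoly k 2 m := X (1, 0)

/-- A differential automorphism: an algebra automorphism commuting with all derivations. -/
def IsDiffAut {k : Type} [CommRing k] {m : ℕ}
    (φ : DiffPoly k 2 m ≃ₐ[k] DiffPoly k 2 m) : Prop :=
  ∀ i x, φ (der k 2 m i x) = der k 2 m i (φ x)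

/-- An elementary automorphism: of the form `(a x + f(y), y)` or `(x, b y + g(x))`. -/
def IsElementary {k : Type} [CommRing k] {m : ℕ}
    (φ : DiffPoly k 2 m ≃ₐ[k] DiffPoly k 2 m) : Prop :=
  IsDiffAut φ ∧
    ((∃ a : k, a ≠ 0 ∧ ∃ f ∈ diffAdjoin k {yy k m},
        φ (xx k m) = C a * xx k m + f ∧ φ (yy k m) = yy k m) ∨
     (∃ b : k, b ≠ 0 ∧ ∃ g ∈ diffAdjoin k {xx k m},
        φ (yy k m) = C b * yy k m + g ∧ φ (xx k m) = xx k m))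

/-- A tame automorphism: a composition of elementary automorphisms. -/
def IsTame {k : Type} [CommRing k] {m : ℕ}
    (φ : DiffPoly k 2 m ≃ₐ[k] DiffPoly k 2 m) : Prop :=
  φ ∈ Subgroup.closure {ψ | IsElementary ψ}

/-- An affine automorphism `(a₁x + b₁y + c₁, a₂x + b₂y + c₂)`. -/
def IsAffine {k : Type} [CommRing k] {m : ℕ}
    (φ : DiffPoly k 2 m ≃ₐ[k] DiffPoly k 2 m) : Prop :=
  IsDiffAut φ ∧ ∃ a₁ b₁ c₁ a₂ b₂ c₂ : k, a₁ * b₂ ≠ a₂ * b₁ ∧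
    φ (xx k m) = C a₁ * xx k m + C b₁ * yy k m + C c₁ ∧
    φ (yy k m) = C a₂ * xx k m + C b₂ * yy k m + C c₂

/-- A triangular automorphism `(a x + f(y), b y + c)`. -/
def IsTriangular {k : Type} [CommRing k] {m : ℕ}
    (φ : DiffPoly k 2 m ≃ₐ[k] DiffPoly k 2 m) : Prop :=
  IsDiffAut φ ∧ ∃ a b c : k, a ≠ 0 ∧ b ≠ 0 ∧ ∃ f ∈ diffAdjoin k {yy k m},
    φ (xx k m) = C a * xx k m + f ∧ φ (yy k m) = C b * yy k m + C c

/-- Membership in `C = Af₂(A) ∩ Tr₂(A)`. -/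
def InC {k : Type} [CommRing k] {m : ℕ}
    (φ : DiffPoly k 2 m ≃ₐ[k] DiffPoly k 2 m) : Prop :=
  IsAffine φ ∧ IsTriangular φ

/-- Membership in the set `A₀ = {id} ∪ {(y, x + a y) : a ∈ k}` of coset representatives. -/
def InA0 {k : Type} [CommRing k] {m : ℕ}
    (φ : DiffPoly k 2 m ≃ₐ[k] DiffPoly k 2 m) : Prop :=
  IsDiffAut φ ∧ (φ = 1 ∨ ∃ a : k,
    φ (xx k m) = yy k m ∧ φ (yy k m) = xx k m + C a * yy k m)

/-- Membership in the set `B₀ = {(x + q(y), y)}`, all homogeneous components of `q` of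
degree at least `2`, of coset representatives. -/
def InB0 {k : Type} [CommRing k] {m : ℕ}
    (φ : DiffPoly k 2 m ≃ₐ[k] DiffPoly k 2 m) : Prop :=
  IsDiffAut φ ∧ ∃ q ∈ diffAdjoin k {yy k m},
    (∀ d : ℕ, d < 2 → weightedHomogeneousComponent (dwt 2 m) d q = 0) ∧
    φ (xx k m) = xx k m + q ∧ φ (yy k m) = yy k m

namespace MvPolynomial

open Finsupp

variable {R σ τ : Type*} [CommSemiring R] {w : σ → ℕ}

theorem IsWeightedHomogeneous.weightedTotalDegree_le {φ : MvPolynomial σ R} {a : ℕ}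
    (hφ : IsWeightedHomogeneous w φ a) : weightedTotalDegree w φ ≤ a :=
  Finset.sup_le fun _ hd => (hφ (mem_support_iff.mp hd)).le

theorem weightedTotalDegree_mul_le (φ ψ : MvPolynomial σ R) :
    weightedTotalDegree w (φ * ψ) ≤ weightedTotalDegree w φ + weightedTotalDegree w ψ := by
  classical
  refine Finset.sup_le fun d hd => ?_
  obtain ⟨d₁, hd₁, d₂, hd₂, rfl⟩ := Finset.mem_add.mp (support_mul φ ψ hd)
  rw [map_add]
  exact add_le_add (le_weightedTotalDegree w hd₁) (le_weightedTotalDegree w hd₂)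

theorem weightedTotalDegree_le_of_weightedHomogeneousComponent_eq_zero {φ : MvPolynomial σ R}
    {a : ℕ} (h : ∀ b, a < b → weightedHomogeneousComponent w b φ = 0) :
    weightedTotalDegree w φ ≤ a := by
  classical
  refine Finset.sup_le fun d hd => not_lt.mp fun had => mem_support_iff.mp hd ?_
  simpa [coeff_weightedHomogeneousComponent] using congr_arg (coeff d) (h _ had)

theorem weightedHomogeneousComponent_weightedTotalDegree_ne_zero {φ : MvPolynomial σ R}
    (hφ : φ ≠ 0) : weightedHomogeneousComponent w (weightedTotalDegree w φ) φ ≠ 0 := by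
  classical
  obtain ⟨d, hd, hdeg⟩ :=
    Finset.exists_mem_eq_sup φ.support (support_nonempty.mpr hφ) (weight w)
  refine ne_zero_iff.mpr ⟨d, ?_⟩
  rwa [coeff_weightedHomogeneousComponent, weightedTotalDegree, ← hdeg, if_pos rfl,
    ← mem_support_iff]

theorem weightedHomogeneousComponent_mul_of_le {φ ψ : MvPolynomial σ R} {a b : ℕ}
    (hφ : weightedTotalDegree w φ ≤ a) (hψ : weightedTotalDegree w ψ ≤ b) :
    weightedHomogeneousComponent w (a + b) (φ * ψ)
      = weightedHomogeneousComponent w a φ * weightedHomogeneousComponent w b ψ := by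
  classical
  ext d
  simp only [coeff_weightedHomogeneousComponent, coeff_mul]
  split_ifs with hd
  · refine Finset.sum_congr rfl fun ⟨d₁, d₂⟩ hmem => ?_
    dsimp only
    have hsum : weight w d₁ + weight w d₂ = a + b := by
      rw [← map_add, Finset.HasAntidiagonal.mem_antidiagonal.mp hmem, hd]
    by_cases h₁ : coeff d₁ φ = 0
    · simp [h₁]
    by_cases h₂ : coeff d₂ ψ = 0
    · simp [h₂]
    have := le_weightedTotalDegree w (mem_support_iff.mpr h₁)
    have := le_weightedTotalDegree w (mem_support_iff.mpr h₂)
    rw [if_pos (by omega), if_pos (by omega)]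
  · refine (Finset.sum_eq_zero fun ⟨d₁, d₂⟩ hmem => ?_).symm
    dsimp only
    have hsum : weight w d₁ + weight w d₂ = weight w d := by
      rw [← map_add, Finset.HasAntidiagonal.mem_antidiagonal.mp hmem]
    split_ifs <;> first | omega | simp

theorem weightedTotalDegree_pow_le (φ : MvPolynomial σ R) (e : ℕ) :
    weightedTotalDegree w (φ ^ e) ≤ e * weightedTotalDegree w φ := by
  induction e with
  | zero => simpa using (isWeightedHomogeneous_one R w).weightedTotalDegree_le
  | succ e ih =>
    rw [pow_succ, Nat.succ_mul]
    exact (weightedTotalDegree_mul_le _ _).trans (by omega)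

theorem weightedHomogeneousComponent_pow_of_le {φ : MvPolynomial σ R} {a : ℕ}
    (hφ : weightedTotalDegree w φ ≤ a) (e : ℕ) :
    weightedHomogeneousComponent w (e * a) (φ ^ e) = weightedHomogeneousComponent w a φ ^ e := by
  induction e with
  | zero => simpa using weightedHomogeneousComponent_eq_self (isWeightedHomogeneous_one R w)
  | succ e ih =>
    rw [pow_succ, pow_succ, Nat.succ_mul, weightedHomogeneousComponent_mul_of_le
      ((weightedTotalDegree_pow_le φ e).trans (Nat.mul_le_mul_left e hφ)) hφ, ih]

section Products

variable {ι : Type*} {g : ι → MvPolynomial σ R} {d : ι → ℕ}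

theorem weightedTotalDegree_prod_pow_le (hg : ∀ i, weightedTotalDegree w (g i) ≤ d i)
    (s : Finset ι) (e : ι → ℕ) :
    weightedTotalDegree w (∏ i ∈ s, g i ^ e i) ≤ ∑ i ∈ s, e i * d i := by
  classical
  induction s using Finset.induction_on with
  | empty => simpa using (isWeightedHomogeneous_one R w).weightedTotalDegree_le
  | insert i s hi ih =>
    rw [Finset.prod_insert hi, Finset.sum_insert hi]
    exact (weightedTotalDegree_mul_le _ _).trans (add_le_add
      ((weightedTotalDegree_pow_le _ _).trans (Nat.mul_le_mul_left _ (hg i))) ih)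

theorem weightedHomogeneousComponent_prod_pow (hg : ∀ i, weightedTotalDegree w (g i) ≤ d i)
    (s : Finset ι) (e : ι → ℕ) :
    weightedHomogeneousComponent w (∑ i ∈ s, e i * d i) (∏ i ∈ s, g i ^ e i)
      = ∏ i ∈ s, weightedHomogeneousComponent w (d i) (g i) ^ e i := by
  classical
  induction s using Finset.induction_on with
  | empty => simpa using weightedHomogeneousComponent_eq_self (isWeightedHomogeneous_one R w)
  | insert i s hi ih =>
    rw [Finset.prod_insert hi, Finset.sum_insert hi, Finset.prod_insert hi,
      weightedHomogeneousComponent_mul_of_le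
        ((weightedTotalDegree_pow_le _ _).trans (Nat.mul_le_mul_left _ (hg i)))
        (weightedTotalDegree_prod_pow_le hg s e),
      weightedHomogeneousComponent_pow_of_le (hg i), ih]

end Products

section Aeval

variable {w' : τ → ℕ} {g : τ → MvPolynomial σ R}

theorem weightedHomogeneousComponent_aeval_monomial
    (hg : ∀ p, weightedTotalDegree w (g p) ≤ w' p) {α : τ →₀ ℕ} {D : ℕ}
    (hα : weight w' α ≤ D) (c : R) :
    weightedHomogeneousComponent w D (aeval g (monomial α c))
      = aeval (fun p => weightedHomogeneousComponent w (w' p) (g p))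
          (weightedHomogeneousComponent w' D (monomial α c)) := by
  have hweight : weight w' α = ∑ p ∈ α.support, α p * w' p := by
    simp [weight_apply, Finsupp.sum]
  have hmon := isWeightedHomogeneous_monomial w' α c rfl
  rcases hα.eq_or_lt with rfl | hlt
  · rw [weightedHomogeneousComponent_eq_self hmon, aeval_monomial, aeval_monomial, algebraMap_eq,
      weightedHomogeneousComponent_C_mul, Finsupp.prod, Finsupp.prod, hweight,
      weightedHomogeneousComponent_prod_pow hg]
  · rw [hmon.weightedHomogeneousComponent_ne _ hlt.ne', map_zero, aeval_monomial, algebraMap_eq,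
      weightedHomogeneousComponent_C_mul, weightedHomogeneousComponent_eq_zero, mul_zero]
    rw [Finsupp.prod]
    exact (weightedTotalDegree_prod_pow_le hg _ _).trans_lt (hweight ▸ hlt)

theorem weightedHomogeneousComponent_aeval (hg : ∀ p, weightedTotalDegree w (g p) ≤ w' p)
    {P : MvPolynomial τ R} {D : ℕ} (hP : weightedTotalDegree w' P ≤ D) :
    weightedHomogeneousComponent w D (aeval g P)
      = aeval (fun p => weightedHomogeneousComponent w (w' p) (g p))
          (weightedHomogeneousComponent w' D P) := by
  conv_lhs => rw [P.as_sum]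
  conv_rhs => rw [P.as_sum]
  simp only [map_sum]
  exact Finset.sum_congr rfl fun α hα =>
    weightedHomogeneousComponent_aeval_monomial hg ((le_weightedTotalDegree w' hα).trans hP) _

theorem weightedTotalDegree_aeval_le (hg : ∀ p, weightedTotalDegree w (g p) ≤ w' p)
    (P : MvPolynomial τ R) : weightedTotalDegree w (aeval g P) ≤ weightedTotalDegree w' P :=
  weightedTotalDegree_le_of_weightedHomogeneousComponent_eq_zero fun _ hb => by
    rw [weightedHomogeneousComponent_aeval hg hb.le, weightedHomogeneousComponent_eq_zero _ _ hb,
      map_zero]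

theorem weightedHomogeneousComponent_weightedTotalDegree_aeval
    (hg : ∀ p, weightedTotalDegree w (g p) ≤ w' p)
    (hinj : Function.Injective
      (aeval (R := R) fun p => weightedHomogeneousComponent w (w' p) (g p)))
    (P : MvPolynomial τ R) :
    weightedHomogeneousComponent w (weightedTotalDegree w (aeval g P)) (aeval g P)
      = aeval (fun p => weightedHomogeneousComponent w (w' p) (g p))
          (weightedHomogeneousComponent w' (weightedTotalDegree w' P) P) := by
  rcases eq_or_ne P 0 with rfl | hP
  · simp
  have htop := weightedHomogeneousComponent_aeval hg (le_refl (weightedTotalDegree w' P))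
  have hne : weightedHomogeneousComponent w (weightedTotalDegree w' P) (aeval g P) ≠ 0 := by
    rw [htop]
    exact (map_ne_zero_iff _ hinj).mpr (weightedHomogeneousComponent_weightedTotalDegree_ne_zero hP)
  have hdeg : weightedTotalDegree w (aeval g P) = weightedTotalDegree w' P :=
    (weightedTotalDegree_aeval_le hg P).antisymm
      (not_lt.mp fun h => hne (weightedHomogeneousComponent_eq_zero _ _ h))
  rw [hdeg, htop]

end Aeval

theorem isWeightedHomogeneous_mkDerivation {f : σ → MvPolynomial σ R} {s : ℕ}
    (hf : ∀ p, IsWeightedHomogeneous w (f p) (w p + s)) {φ : MvPolynomial σ R} {a : ℕ}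
    (hφ : IsWeightedHomogeneous w φ a) :
    IsWeightedHomogeneous w (mkDerivation R f φ) (a + s) := by
  induction hφ using IsWeightedHomogeneous.induction_on with
  | zero => simpa using isWeightedHomogeneous_zero R w (a + s)
  | add p q _ _ hp hq => simpa only [map_add] using hp.add hq
  | monomial d r hd =>
    rw [mkDerivation_monomial, smul_eq_C_mul]
    refine (IsWeightedHomogeneous.sum _ _ _ fun p hp => ?_).C_mul r
    have hle : single p 1 ≤ d :=
      single_le_iff.mpr (Nat.one_le_iff_ne_zero.mpr (Finsupp.mem_support_iff.mp hp))
    have hweight : weight w (d - single p 1) + w p = a := by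
      rw [← hd, ← tsub_add_cancel_of_le hle, map_add, weight_single, one_smul,
        add_tsub_cancel_right]
    simpa only [← hweight, add_assoc, smul_eq_mul] using
      (isWeightedHomogeneous_monomial w (d - single p 1) _ rfl).mul (hf p)

section GradedMap

variable {w₂ : τ → ℕ} (L : MvPolynomial σ R →+ MvPolynomial τ R) {s : ℕ}

theorem map_weightedHomogeneousComponent_of_isWeightedHomogeneous
    (hL : ∀ φ a, IsWeightedHomogeneous w φ a → IsWeightedHomogeneous w₂ (L φ) (a + s))
    (a : ℕ) (φ : MvPolynomial σ R) :
    L (weightedHomogeneousComponent w a φ) = weightedHomogeneousComponent w₂ (a + s) (L φ) := by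
  induction φ using MvPolynomial.induction_on' with
  | monomial d r =>
    have hmon := isWeightedHomogeneous_monomial w d r rfl
    by_cases hd : weight w d = a
    · subst hd
      rw [weightedHomogeneousComponent_eq_self hmon,
        weightedHomogeneousComponent_eq_self (hL _ _ hmon)]
    · rw [hmon.weightedHomogeneousComponent_ne _ (Ne.symm hd), map_zero,
        (hL _ _ hmon).weightedHomogeneousComponent_ne _ (by omega)]
  | add p q hp hq => simp only [map_add, hp, hq]

theorem weightedTotalDegree_map_le_of_isWeightedHomogeneous
    (hL : ∀ φ a, IsWeightedHomogeneous w φ a → IsWeightedHomogeneous w₂ (L φ) (a + s))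
    (φ : MvPolynomial σ R) :
    weightedTotalDegree w₂ (L φ) ≤ weightedTotalDegree w φ + s := by
  refine weightedTotalDegree_le_of_weightedHomogeneousComponent_eq_zero fun b hb => ?_
  obtain ⟨c, rfl⟩ : ∃ c, b = c + s := ⟨b - s, by omega⟩
  rw [← map_weightedHomogeneousComponent_of_isWeightedHomogeneous L hL,
    weightedHomogeneousComponent_eq_zero _ _ (by omega), map_zero]

end GradedMap

end MvPolynomial

namespace Fin

variable {α : Type*}

theorem foldr_eq_self {N : ℕ} {F : Fin N → α → α} {x : α} (h : ∀ j, F j x = x) :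
    Fin.foldr N F x = x := by
  induction N with
  | zero => rfl
  | succ N ih => rw [foldr_succ, ih fun j => h j.succ, h]

theorem foldr_update_comp {h : α → α} :
    ∀ {N : ℕ} {F : Fin N → α → α} (i : Fin N), (∀ j, Function.Commute h (F j)) →
      ∀ x, Fin.foldr N (Function.update F i (F i ∘ h)) x = h (Fin.foldr N F x)
  | N + 1, F, i, hF, x => by
    cases i using Fin.cases with
    | zero =>
      simp only [foldr_succ, Function.update_self, Function.comp_apply,
        Function.update_of_ne (Fin.succ_ne_zero _)]
      exact ((hF 0).eq _).symm
    | succ i =>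
      have htail : (fun j => Function.update F i.succ (F i.succ ∘ h) j.succ)
          = Function.update (fun j => F j.succ) i (F i.succ ∘ h) :=
        Function.update_comp_eq_of_injective F (Fin.succ_injective _) i _
      rw [foldr_succ, foldr_succ, htail, foldr_update_comp i (fun j => hF j.succ),
        Function.update_of_ne (Fin.succ_ne_zero i).symm, (hF 0).eq]

end Fin

theorem Finsupp.induction_add_single_one {α : Type*} {motive : (α →₀ ℕ) → Prop}
    (θ : α →₀ ℕ) (zero : motive 0)
    (add_single : ∀ θ a, motive θ → motive (θ + Finsupp.single a 1)) : motive θ := by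
  induction θ using Finsupp.induction₂ with
  | zero => exact zero
  | add_single a _ θ _ _ ih =>
    have key : ∀ b : ℕ, motive (θ + Finsupp.single a b) := fun b => by
      induction b with
      | zero => simpa using ih
      | succ b ihb => simpa only [Finsupp.single_add, ← add_assoc] using add_single _ a ihb
    exact key _

theorem Derivation.mapsTo_adjoin {R A : Type*} [CommSemiring R] [CommSemiring A]
    [Algebra R A] (D : Derivation R A A) {s : Set A} (hs : Set.MapsTo D s (Algebra.adjoin R s)) :
    Set.MapsTo D (Algebra.adjoin R s) (Algebra.adjoin R s) := fun x hx => by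
  induction hx using Algebra.adjoin_induction with
  | mem x hx => exact hs hx
  | algebraMap r => simp
  | add x y _ _ hx hy => rw [map_add]; exact add_mem hx hy
  | mul x y hx' hy' hx hy =>
    rw [Derivation.leibniz, smul_eq_mul, smul_eq_mul]
    exact add_mem (mul_mem hx' hy) (mul_mem hy' hx)

section DiffPoly

open Finsupp

variable {k : Type} [CommRing k] {n m : ℕ}

theorem dwt_apply (p : Fin n × DOp m) : dwt n m p = 1 + p.2.degree := rfl

theorem der_X (i : Fin m) (p : Fin n × DOp m) :
    der k n m i (X p) = X (p.1, p.2 + single i 1) :=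
  mkDerivation_X _ _ _

theorem der_commute (i j : Fin m) :
    Function.Commute (der k n m i) (der k n m j) := fun φ => by
  have h : ⁅der k n m i, der k n m j⁆ = 0 :=
    derivation_ext fun p => by simp [Derivation.commutator_apply, der_X, add_right_comm]
  simpa [Derivation.commutator_apply, sub_eq_zero] using DFunLike.congr_fun h φ

theorem applyOp_zero (φ : DiffPoly k n m) : applyOp 0 φ = φ :=
  Fin.foldr_eq_self fun _ => rfl

theorem applyOp_add_single (θ : DOp m) (i : Fin m) (φ : DiffPoly k n m) :
    applyOp (θ + single i 1) φ = der k n m i (applyOp θ φ) := by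
  have hF : (fun j ψ => (der k n m j)^[(θ + single i 1 : DOp m) j] ψ)
      = Function.update (fun j => (der k n m j)^[θ j]) i
          ((der k n m i)^[θ i] ∘ der k n m i) := by
    funext j ψ
    rcases eq_or_ne j i with rfl | hj
    · simp [Function.iterate_succ]
    · simp [Function.update_of_ne hj, single_eq_of_ne hj]
  unfold applyOp
  rw [hF]
  exact Fin.foldr_update_comp i (fun j => (der_commute i j).iterate_right _) φ

theorem applyOp_add (θ : DOp m) (φ ψ : DiffPoly k n m) :
    applyOp θ (φ + ψ) = applyOp θ φ + applyOp θ ψ := by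
  induction θ using Finsupp.induction_add_single_one with
  | zero => simp only [applyOp_zero]
  | add_single θ i ih => simp only [applyOp_add_single, ih, map_add]

theorem isWeightedHomogeneous_der (i : Fin m) {φ : DiffPoly k n m} {a : ℕ}
    (hφ : IsWeightedHomogeneous (dwt n m) φ a) :
    IsWeightedHomogeneous (dwt n m) (der k n m i φ) (a + 1) :=
  isWeightedHomogeneous_mkDerivation (fun p => by
    convert isWeightedHomogeneous_X k (dwt n m) (p.1, p.2 + single i 1) using 1
    rw [dwt_apply, dwt_apply, map_add, degree_single, add_assoc]) hφ

theorem isWeightedHomogeneous_applyOp (θ : DOp m) {φ : DiffPoly k n m} {a : ℕ}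
    (hφ : IsWeightedHomogeneous (dwt n m) φ a) :
    IsWeightedHomogeneous (dwt n m) (applyOp θ φ) (a + θ.degree) := by
  induction θ using Finsupp.induction_add_single_one with
  | zero => simpa [applyOp_zero] using hφ
  | add_single θ i ih =>
    simpa [applyOp_add_single, add_assoc] using isWeightedHomogeneous_der i ih

theorem applyOp_weightedHomogeneousComponent (θ : DOp m) (a : ℕ) (φ : DiffPoly k n m) :
    applyOp θ (weightedHomogeneousComponent (dwt n m) a φ)
      = weightedHomogeneousComponent (dwt n m) (a + θ.degree) (applyOp θ φ) :=
  map_weightedHomogeneousComponent_of_isWeightedHomogeneous (AddMonoidHom.mk' _ (applyOp_add θ))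
    (fun _ _ => isWeightedHomogeneous_applyOp θ) a φ

theorem ddeg_applyOp_le (θ : DOp m) (φ : DiffPoly k n m) :
    ddeg (applyOp θ φ) ≤ ddeg φ + θ.degree :=
  weightedTotalDegree_map_le_of_isWeightedHomogeneous (AddMonoidHom.mk' _ (applyOp_add θ))
    (fun _ _ => isWeightedHomogeneous_applyOp θ) φ

theorem subset_diffAdjoin (S : Set (DiffPoly k n m)) : S ⊆ diffAdjoin k S :=
  fun _ hx => Algebra.mem_sInf.mpr fun _ hT => hT.1 hx

theorem der_mem_diffAdjoin {S : Set (DiffPoly k n m)} (i : Fin m) {φ : DiffPoly k n m}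
    (hφ : φ ∈ diffAdjoin k S) : der k n m i φ ∈ diffAdjoin k S :=
  Algebra.mem_sInf.mpr fun T hT => hT.2 i φ (Algebra.mem_sInf.mp hφ T hT)

theorem diffAdjoin_le {S : Set (DiffPoly k n m)} {T : Subalgebra k (DiffPoly k n m)}
    (hS : S ⊆ T) (hT : ∀ i, ∀ φ ∈ T, der k n m i φ ∈ T) : diffAdjoin k S ≤ T :=
  sInf_le ⟨hS, hT⟩

theorem applyOp_mem_diffAdjoin {S : Set (DiffPoly k n m)} (θ : DOp m) {φ : DiffPoly k n m}
    (hφ : φ ∈ diffAdjoin k S) : applyOp θ φ ∈ diffAdjoin k S := by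
  induction θ using Finsupp.induction_add_single_one with
  | zero => rwa [applyOp_zero]
  | add_single θ i ih => rw [applyOp_add_single]; exact der_mem_diffAdjoin i ih

theorem diffAdjoin_range_eq_adjoin {r : ℕ} (f : Fin r → DiffPoly k n m) :
    diffAdjoin k (Set.range f)
      = Algebra.adjoin k (Set.range fun p : Fin r × DOp m => applyOp p.2 (f p.1)) := by
  refine le_antisymm (diffAdjoin_le ?_ fun i φ hφ => ?_) (Algebra.adjoin_le ?_)
  · rintro _ ⟨j, rfl⟩
    exact Algebra.subset_adjoin ⟨(j, 0), applyOp_zero _⟩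
  · refine (der k n m i).mapsTo_adjoin ?_ hφ
    rintro _ ⟨p, rfl⟩
    exact Algebra.subset_adjoin ⟨(p.1, p.2 + single i 1), applyOp_add_single _ _ _⟩
  · rintro _ ⟨p, rfl⟩
    exact applyOp_mem_diffAdjoin p.2 (subset_diffAdjoin _ ⟨p.1, rfl⟩)

end DiffPoly

theorem stmt1_general {k : Type} [Field k] {n m r : ℕ}
    (f : Fin r → DiffPoly k n m)
    (hind : Function.Injective
      (aeval (fun p : Fin r × DOp m => applyOp p.2 (dtop (f p.1))) :
        DiffPoly k r m →ₐ[k] DiffPoly k n m))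
    (u : DiffPoly k n m) (hu : u ∈ diffAdjoin k (Set.range f)) :
    dtop u ∈ diffAdjoin k (Set.range fun i => dtop (f i)) := by
  rw [diffAdjoin_range_eq_adjoin, Algebra.adjoin_range_eq_range_aeval] at hu ⊢
  obtain ⟨P, rfl⟩ := hu
  set w' : Fin r × DOp m → ℕ := fun p => ddeg (f p.1) + p.2.degree
  have htop : (fun p => weightedHomogeneousComponent (dwt n m) (w' p) (applyOp p.2 (f p.1)))
      = fun p => applyOp p.2 (dtop (f p.1)) :=
    funext fun p => (applyOp_weightedHomogeneousComponent _ _ _).symm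
  have hdeg : ∀ p, ddeg (applyOp p.2 (f p.1)) ≤ w' p := fun p => ddeg_applyOp_le _ _
  refine ⟨weightedHomogeneousComponent w' (weightedTotalDegree w' P) P, ?_⟩
  rw [← htop]
  exact (weightedHomogeneousComponent_weightedTotalDegree_aeval hdeg (htop ▸ hind) P).symm

/-- If the highest homogeneous parts of `f_1,…,f_r` are differentially algebraically
independent over `k`, then for every `u` in the differential subalgebra generated by the
`f_i`, its highest homogeneous part lies in the differential subalgebra generated by the
highest homogeneous parts of the `f_i`. -/
theorem stmt1 {k : Type} [Field k] [CharZero k] {n m r : ℕ}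
    (f : Fin r → DiffPoly k n m)
    (hind : Function.Injective
      (aeval (fun p : Fin r × DOp m => applyOp p.2 (dtop (f p.1))) :
        DiffPoly k r m →ₐ[k] DiffPoly k n m))
    (u : DiffPoly k n m) (hu : u ∈ diffAdjoin k (Set.range f)) :
    dtop u ∈ diffAdjoin k (Set.range fun i => dtop (f i)) :=
  stmt1_general f hind u hu
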